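/- Let G_σ be a sign-connected signed graph containing two vertex-disjoint negative cycles. Then every sign articulation vertex of G_σ is an articulation vertex of G. -/
import Mathlib


namespace SignedGraph

variable {V : Type*}

/-- The sign of a walk in a signed graph: the product of its edge signs. -/
def walkSign {G : SimpleGraph V} (σ : V → V → ℤˣ) : {u v : V} → G.Walk u v → ℤˣ
  | _, _, SimpleGraph.Walk.nil => 1
  | u, _, SimpleGraph.Walk.cons (v := w) _ p => σ u w * walkSign σ p

/-- A signed graph is balanced if every cycle has positive sign. -/
def Balanced (G : SimpleGraph V) (σ : V → V → ℤˣ) : Prop :=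
  ∀ ⦃u : V⦄ (c : G.Walk u u), c.IsCycle → walkSign σ c = 1

/-- Sign connection: every two distinct vertices are joined both by a
positive and by a negative walk. -/
def SignConnected (G : SimpleGraph V) (σ : V → V → ℤˣ) : Prop :=
  ∀ x y : V, x = y ∨
    ((∃ p : G.Walk x y, walkSign σ p = 1) ∧ (∃ p : G.Walk x y, walkSign σ p = -1))

open Classical in
/-- Switching by a vertex subset `W`: negate the signs of edges with exactly
one endpoint in `W`. -/
noncomputable def switchSign (W : Set V) (σ : V → V → ℤˣ) (u v : V) : ℤˣ :=
  if Xor' (u ∈ W) (v ∈ W) then -σ u v else σ u v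

end SignedGraph


namespace SignedGraph

lemma walkSign_append {V : Type*} {G : SimpleGraph V} (σ : V → V → ℤˣ) :
    ∀ {a b c : V} (p : G.Walk a b) (q : G.Walk b c),
      walkSign σ (p.append q) = walkSign σ p * walkSign σ q
  | _, _, _, SimpleGraph.Walk.nil, q => by simp [walkSign]
  | _, _, _, SimpleGraph.Walk.cons h p, q => by
      simp [walkSign, walkSign_append σ p q, mul_assoc]

lemma walkSign_reverse {V : Type*} {G : SimpleGraph V} (σ : V → V → ℤˣ)
    (hσ : ∀ u v : V, σ u v = σ v u) :
    ∀ {a b : V} (p : G.Walk a b), walkSign σ p.reverse = walkSign σ p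
  | _, _, SimpleGraph.Walk.nil => rfl
  | _, _, SimpleGraph.Walk.cons h p => by
      simp [SimpleGraph.Walk.reverse_cons, walkSign_append, walkSign,
        walkSign_reverse σ hσ p, hσ, mul_comm]

/-- Lift a walk whose support lies in `s` to the induced subgraph on `s`. -/
def liftWalk {V : Type*} {G : SimpleGraph V} {s : Set V} :
    ∀ {a b : V} (p : G.Walk a b) (h : ∀ z ∈ p.support, z ∈ s),
      (G.induce s).Walk ⟨a, h a p.start_mem_support⟩ ⟨b, h b p.end_mem_support⟩
  | _, _, SimpleGraph.Walk.nil, _ => SimpleGraph.Walk.nil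
  | _, _, SimpleGraph.Walk.cons (v := w) hadj p, h =>
      SimpleGraph.Walk.cons (by exact hadj)
        (liftWalk p fun z hz => h z (by simp [hz]))

lemma walkSign_liftWalk {V : Type*} {G : SimpleGraph V} {s : Set V} (σ : V → V → ℤˣ) :
    ∀ {a b : V} (p : G.Walk a b) (h : ∀ z ∈ p.support, z ∈ s),
      walkSign (fun a b : s => σ a.1 b.1) (liftWalk p h) = walkSign σ p
  | _, _, SimpleGraph.Walk.nil, _ => rfl
  | _, _, SimpleGraph.Walk.cons hadj p, h => by
      simp [liftWalk, walkSign, walkSign_liftWalk σ p]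

end SignedGraph

open SignedGraph

/-- In a sign-connected signed graph containing two vertex-disjoint negative
cycles, every sign articulation vertex is an articulation vertex. -/
theorem stmt_12 {V : Type*} [Fintype V] (G : SimpleGraph V) (σ : V → V → ℤˣ)
    (hσ : ∀ u v : V, σ u v = σ v u) (hsc : SignConnected G σ)
    {u u' : V} (c : G.Walk u u) (c' : G.Walk u' u')
    (hc : c.IsCycle) (hc' : c'.IsCycle)
    (hcneg : walkSign σ c = -1) (hc'neg : walkSign σ c' = -1)
    (hdisj : ∀ z : V, z ∈ c.support → z ∉ c'.support) :
    ∀ x : V, ¬ SignConnected (G.induce {x}ᶜ) (fun a b => σ a.1 b.1) →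
      ¬ (G.induce {x}ᶜ).Connected := by
  intro x hns hconn
  apply hns
  obtain ⟨w, k, hkx, hkneg⟩ :
      ∃ (w : V) (k : G.Walk w w), (x ∉ k.support) ∧ walkSign σ k = -1 := by
    by_cases hx : x ∈ c.support
    · exact ⟨u', c', fun hx' => hdisj x hx hx', hc'neg⟩
    · exact ⟨u, c, hx, hcneg⟩
  have hw : w ∈ ({x}ᶜ : Set V) := by
    simp only [Set.mem_compl_iff, Set.mem_singleton_iff]
    rintro rfl
    exact hkx k.start_mem_support
  set σ' : ({x}ᶜ : Set V) → ({x}ᶜ : Set V) → ℤˣ := fun a b => σ a.1 b.1 with hσ'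
  have hσ'symm : ∀ a b, σ' a b = σ' b a := fun a b => hσ a.1 b.1
  have hksub : ∀ z ∈ k.support, z ∈ ({x}ᶜ : Set V) := by
    intro z hz
    simp only [Set.mem_compl_iff, Set.mem_singleton_iff]
    rintro rfl; exact hkx hz
  let k' : (G.induce {x}ᶜ).Walk ⟨w, hw⟩ ⟨w, hw⟩ := liftWalk k hksub
  have hk'neg : walkSign σ' k' = -1 := by
    simpa [σ'] using (walkSign_liftWalk σ k hksub).trans hkneg
  intro a b
  right
  obtain ⟨p⟩ := hconn.preconnected a b
  obtain ⟨q⟩ := hconn.preconnected b ⟨w, hw⟩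
  set p2 : (G.induce {x}ᶜ).Walk a b := p.append ((q.append (k'.append q.reverse)))
    with hp2
  have hp2sign : walkSign σ' p2 = -walkSign σ' p := by
    simp only [hp2, walkSign_append, walkSign_reverse σ' hσ'symm, hk'neg]
    rcases Int.units_eq_one_or (walkSign σ' q) with h | h <;> simp [h] <;> ring
  rcases Int.units_eq_one_or (walkSign σ' p) with h | h
  · exact ⟨⟨p, h⟩, ⟨p2, by rw [hp2sign, h]⟩⟩
  · exact ⟨⟨p2, by rw [hp2sign, h]; simp⟩, ⟨p, h⟩⟩
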